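/- Characterisation of the family 𝔊_σ of symmetric and real contractions: given nonzero complex numbers α, β, γ and nonzero m ∈ ℝ, the two conditions (i) there exists c ∈ ℂ with T(T(x)) = c·x for all x ∈ Λ¹, and (ii) T(x*) = (T(x))* for all x ∈ Λ¹, hold simultaneously if and only if β = q⁶ α with α ∈ ℝ and γ ∈ ℝ. -/

import Mathlib

open TensorProduct

noncomputable section

/-- The 3-dimensional complex vector space with basis `ω 0 = ω₋`, `ω 1 = ω₊`, `ω 2 = ω_z`. -/
abbrev V : Type := Fin 3 → ℂ

/-- The distinguished basis `(ω₋, ω₊, ω_z)` of `V`. -/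
def ω : Fin 3 → V := fun i => Pi.basisFun ℂ (Fin 3) i

/-- The degree-2 relations of the exterior algebra of the 3d calculus: each generator is
set equal to `0`.  `RingQuot` of this relation is the quotient of the tensor algebra by the
two-sided ideal generated by the six elements. -/
inductive rel (q : ℝ) : TensorAlgebra ℂ V → TensorAlgebra ℂ V → Prop
  | mm : rel q (TensorAlgebra.ι ℂ (ω 0) * TensorAlgebra.ι ℂ (ω 0)) 0
  | pp : rel q (TensorAlgebra.ι ℂ (ω 1) * TensorAlgebra.ι ℂ (ω 1)) 0
  | zz : rel q (TensorAlgebra.ι ℂ (ω 2) * TensorAlgebra.ι ℂ (ω 2)) 0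
  | mp : rel q (TensorAlgebra.ι ℂ (ω 0) * TensorAlgebra.ι ℂ (ω 1) +
      ((q : ℂ) ^ 2)⁻¹ • (TensorAlgebra.ι ℂ (ω 1) * TensorAlgebra.ι ℂ (ω 0))) 0
  | zm : rel q (TensorAlgebra.ι ℂ (ω 2) * TensorAlgebra.ι ℂ (ω 0) +
      (q : ℂ) ^ 4 • (TensorAlgebra.ι ℂ (ω 0) * TensorAlgebra.ι ℂ (ω 2))) 0
  | zp : rel q (TensorAlgebra.ι ℂ (ω 2) * TensorAlgebra.ι ℂ (ω 1) +
      ((q : ℂ) ^ 4)⁻¹ • (TensorAlgebra.ι ℂ (ω 1) * TensorAlgebra.ι ℂ (ω 2))) 0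

/-- The exterior algebra `Λ` of the 3d calculus. -/
abbrev Lam (q : ℝ) : Type := RingQuot (rel q)

/-- The quotient map `T(V) → Λ`. -/
def mkL (q : ℝ) : TensorAlgebra ℂ V →ₐ[ℂ] Lam q := RingQuot.mkAlgHom ℂ (rel q)

/-- The degree-`k` component `Λᵏ` of `Λ`: the image of the `k`-th power of the degree-1
part of the tensor algebra (the grading induced from the tensor algebra). -/
def gradeL (q : ℝ) (k : ℕ) : Submodule ℂ (Lam q) :=
  Submodule.map (mkL q).toLinearMap
    ((LinearMap.range (TensorAlgebra.ι ℂ : V →ₗ[ℂ] TensorAlgebra ℂ V)) ^ k)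

/-- The images `ω₋, ω₊, ω_z` of the basis 1-forms in `Λ¹`. -/
def ωL (q : ℝ) (a : Fin 3) : Lam q := mkL q (TensorAlgebra.ι ℂ (ω a))

/-- `f₋ = ω₋∧ω_z ∈ Λ²`. -/
def fm (q : ℝ) : Lam q := mkL q (TensorAlgebra.ι ℂ (ω 0) * TensorAlgebra.ι ℂ (ω 2))

/-- `f₊ = ω₊∧ω_z ∈ Λ²`. -/
def fp (q : ℝ) : Lam q := mkL q (TensorAlgebra.ι ℂ (ω 1) * TensorAlgebra.ι ℂ (ω 2))

/-- `f_z = ω₋∧ω₊ ∈ Λ²`. -/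
def fz (q : ℝ) : Lam q := mkL q (TensorAlgebra.ι ℂ (ω 0) * TensorAlgebra.ι ℂ (ω 1))

/-- The top form `θ = ω₋∧ω₊∧ω_z ∈ Λ³`. -/
def θL (q : ℝ) : Lam q :=
  mkL q (TensorAlgebra.ι ℂ (ω 0) * TensorAlgebra.ι ℂ (ω 1) * TensorAlgebra.ι ℂ (ω 2))

/-- `λ₂ = 1 + q²`. -/
def lam2 (q : ℝ) : ℂ := 1 + (q : ℂ) ^ 2

/-- `λ₃ = 1 + 2q² + 2q⁴ + q⁶`. -/
def lam3 (q : ℝ) : ℂ := 1 + 2 * (q : ℂ) ^ 2 + 2 * (q : ℂ) ^ 4 + (q : ℂ) ^ 6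

/-- `T : Λ → Λ` is the Hodge operator of the left-invariant contraction
`g(ω₋,ω₊) = α`, `g(ω₊,ω₋) = β`, `g(ω_z,ω_z) = γ` with volume form `μ = mθ`: these
equations pin down `T` on the basis `1, ω₋, ω₊, ω_z, f₋, f₊, f_z, θ` of `Λ`. -/
def IsHodge (q : ℝ) (α β γ m : ℂ) (T : Lam q →ₗ[ℂ] Lam q) : Prop :=
  T 1 = m • θL q ∧
  T (ωL q 0) = (-(((q : ℂ) ^ 2)⁻¹ * m * β)) • fm q ∧
  T (ωL q 1) = (m * α) • fp q ∧
  T (ωL q 2) = (m * γ) • fz q ∧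
  T (fm q) = (2 * ((q : ℂ) ^ 4)⁻¹ * (lam2 q)⁻¹ * m * β * γ) • ωL q 0 ∧
  T (fp q) = (-(2 * (q : ℂ) ^ 6 * (lam2 q)⁻¹ * m * α * γ)) • ωL q 1 ∧
  T (fz q) = (-(2 * (lam2 q)⁻¹ * m * α * β)) • ωL q 2 ∧
  T (θL q) = (-(6 * (q : ℂ) ^ 4 * (lam3 q)⁻¹ * m * α * β * γ)) • (1 : Lam q)

/-- `st : Λ → Λ` is the antilinear involution determined by the `*`-structure of the
calculus: these equations pin down `st` on the basis `1, ω₋, ω₊, ω_z, f₋, f₊, f_z, θ`. -/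
def IsStar (q : ℝ) (st : Lam q →ₛₗ[starRingEnd ℂ] Lam q) : Prop :=
  st 1 = 1 ∧
  st (ωL q 0) = -ωL q 1 ∧
  st (ωL q 1) = -ωL q 0 ∧
  st (ωL q 2) = -ωL q 2 ∧
  st (fm q) = ((q : ℂ) ^ 4)⁻¹ • fp q ∧
  st (fp q) = (q : ℂ) ^ 4 • fm q ∧
  st (fz q) = -fz q ∧
  st (θL q) = θL q

/-!
On the basis `ω₋, ω₊, ω_z` of `Λ¹`, `T²` is diagonal with eigenvalues
`-2λ₂⁻¹m²γ · (q⁻⁶β², q⁶α², αβ)`, which agree exactly when `β = q⁶α`; and `T ∘ * - * ∘ T` sends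
`ω₋, ω₊, ω_z` to multiples of `f₊, f₋, f_z` whose coefficients vanish exactly when `β̄ = q⁶α` and
`γ̄ = γ`. Reading off these coefficients requires `f_z ≠ 0` and `f₊ ≠ 0` in `Λ`, which is witnessed
by algebra maps `Λ → M₄(ℂ)`. Finally `β = q⁶α = β̄` forces `α` to be real.
-/

section

variable {q : ℝ}

theorem exists_algHom_ωL {A : Type*} [Ring A] [Algebra ℂ A] (a : Fin 3 → A)
    (h00 : a 0 * a 0 = 0) (h11 : a 1 * a 1 = 0) (h22 : a 2 * a 2 = 0)
    (h01 : a 0 * a 1 + ((q : ℂ) ^ 2)⁻¹ • (a 1 * a 0) = 0)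
    (h20 : a 2 * a 0 + (q : ℂ) ^ 4 • (a 0 * a 2) = 0)
    (h21 : a 2 * a 1 + ((q : ℂ) ^ 4)⁻¹ • (a 1 * a 2) = 0) :
    ∃ ψ : Lam q →ₐ[ℂ] A, ∀ i, ψ (ωL q i) = a i := by
  set φ := TensorAlgebra.lift ℂ ((Pi.basisFun ℂ (Fin 3)).constr ℂ a)
  have hφ : ∀ i, φ (TensorAlgebra.ι ℂ (ω i)) = a i := fun i => by
    simp [φ, ω]
  have hrel : ∀ ⦃x y⦄, rel q x y → φ x = φ y := by
    intro x y hxy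
    cases hxy <;> simpa [hφ]
  exact ⟨RingQuot.liftAlgHom ℂ ⟨φ, hrel⟩, fun i =>
    (RingQuot.liftAlgHom_mkAlgHom_apply ℂ φ hrel _).trans (hφ i)⟩

section SkewPair

open Matrix

variable (s : ℂ)

/-- `skewPairX s` and `skewPairY` satisfy `X² = Y² = 0`, `YX = s • XY` with `XY ≠ 0`; for suitable
`s` they give algebra maps `Λ → M₄(ℂ)` not killing `f_z`, resp. `f₊`. -/
def skewPairX : Matrix (Fin 4) (Fin 4) ℂ := single 0 2 1 + single 1 3 s

def skewPairY : Matrix (Fin 4) (Fin 4) ℂ := single 0 1 1 + single 2 3 1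

theorem skewPairX_mul_self : skewPairX s * skewPairX s = 0 := by
  simp [skewPairX, add_mul, mul_add, single_mul_single_of_ne]

theorem skewPairY_mul_self : skewPairY * skewPairY = 0 := by
  simp [skewPairY, add_mul, mul_add, single_mul_single_of_ne]

theorem skewPairX_mul_skewPairY : skewPairX s * skewPairY = single 0 3 1 := by
  simp [skewPairX, skewPairY, add_mul, mul_add, single_mul_single_of_ne]

theorem skewPairY_mul_skewPairX : skewPairY * skewPairX s = s • (skewPairX s * skewPairY) := by
  simp [skewPairX, skewPairY, add_mul, mul_add, single_mul_single_of_ne, smul_single]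

theorem skewPairX_mul_skewPairY_ne_zero : skewPairX s * skewPairY ≠ 0 := by
  rw [skewPairX_mul_skewPairY]
  intro h
  simpa using congrFun (congrFun h 0) 3

end SkewPair

theorem fz_eq_mul : fz q = ωL q 0 * ωL q 1 := map_mul _ _ _

theorem fp_eq_mul : fp q = ωL q 1 * ωL q 2 := map_mul _ _ _

theorem fz_ne_zero (hq : q ≠ 0) : fz q ≠ 0 := by
  obtain ⟨ψ, hψ⟩ := exists_algHom_ωL (q := q) ![skewPairX (-(q : ℂ) ^ 2), skewPairY, 0]
    (skewPairX_mul_self _) skewPairY_mul_self (mul_zero 0)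
    (by simp [skewPairY_mul_skewPairX, smul_smul, hq]) (by simp) (by simp)
  rw [fz_eq_mul]
  refine ne_zero_of_map (f := ψ) ?_
  simpa [hψ] using skewPairX_mul_skewPairY_ne_zero _

theorem fp_ne_zero : fp q ≠ 0 := by
  obtain ⟨ψ, hψ⟩ := exists_algHom_ωL (q := q) ![0, skewPairX (-((q : ℂ) ^ 4)⁻¹), skewPairY]
    (mul_zero 0) (skewPairX_mul_self _) skewPairY_mul_self (by simp) (by simp)
    (by simp [skewPairY_mul_skewPairX])
  rw [fp_eq_mul]
  refine ne_zero_of_map (f := ψ) ?_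
  simpa [hψ] using skewPairX_mul_skewPairY_ne_zero _

theorem gradeL_one_eq_span : gradeL q 1 = Submodule.span ℂ (Set.range (ωL q)) := by
  rw [gradeL, pow_one, LinearMap.range_eq_map, ← (Pi.basisFun ℂ (Fin 3)).span_eq,
    Submodule.map_span, Submodule.map_span, ← Set.range_comp, ← Set.range_comp]
  rfl

theorem eqOn_gradeL_one {σ : ℂ →+* ℂ} {M : Type*} [AddCommMonoid M] [Module ℂ M]
    {f g : Lam q →ₛₗ[σ] M} (h₀ : f (ωL q 0) = g (ωL q 0)) (h₁ : f (ωL q 1) = g (ωL q 1))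
    (h₂ : f (ωL q 2) = g (ωL q 2)) : ∀ x ∈ gradeL q 1, f x = g x := by
  have h : ∀ a, f (ωL q a) = g (ωL q a) := by
    intro a
    fin_cases a <;> assumption
  rw [gradeL_one_eq_span]
  exact fun x hx => LinearMap.eqOn_span' (Set.forall_mem_range.2 h) hx

theorem ωL_mem_gradeL_one (a : Fin 3) : ωL q a ∈ gradeL q 1 :=
  gradeL_one_eq_span ▸ Submodule.subset_span (Set.mem_range_self a)

theorem lam2_ne_zero : lam2 q ≠ 0 := by
  rw [lam2]
  exact_mod_cast (by positivity : (1 + q ^ 2 : ℝ) ≠ 0)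

theorem IsHodge.symmetric_iff {α β γ m : ℂ} {T : Lam q →ₗ[ℂ] Lam q} (hT : IsHodge q α β γ m T)
    (hq : q ≠ 0) (hβ : β ≠ 0) (hγ : γ ≠ 0) (hm : m ≠ 0) :
    (∃ c : ℂ, ∀ x ∈ gradeL q 1, T (T x) = c • x) ↔ β = (q : ℂ) ^ 6 * α := by
  obtain ⟨-, hT₀, hT₁, hT₂, hTfm, hTfp, hTfz, -⟩ := hT
  have hq₆ : (q : ℂ) ^ 6 ≠ 0 := pow_ne_zero 6 (by exact_mod_cast hq)
  set K := -(2 * (lam2 q)⁻¹ * m ^ 2 * γ)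
  have hTT₀ : T (T (ωL q 0)) = (K * β * (((q : ℂ) ^ 6)⁻¹ * β)) • ωL q 0 := by
    rw [hT₀, map_smul, hTfm, smul_smul]
    congr 1
    simp only [K]
    ring
  have hTT₁ : T (T (ωL q 1)) = (K * ((q : ℂ) ^ 6 * α) * α) • ωL q 1 := by
    rw [hT₁, map_smul, hTfp, smul_smul]
    congr 1
    simp only [K]
    ring
  have hTT₂ : T (T (ωL q 2)) = (K * β * α) • ωL q 2 := by
    rw [hT₂, map_smul, hTfz, smul_smul]
    congr 1
    simp only [K]
    ring
  constructor
  · rintro ⟨c, hc⟩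
    have h₀ : ωL q 0 ≠ 0 := left_ne_zero_of_mul (fz_eq_mul ▸ fz_ne_zero hq)
    have h₂ : ωL q 2 ≠ 0 := right_ne_zero_of_mul (fp_eq_mul ▸ fp_ne_zero)
    have hc₀ := smul_left_injective ℂ h₀ (hTT₀.symm.trans (hc _ (ωL_mem_gradeL_one 0)))
    have hc₂ := smul_left_injective ℂ h₂ (hTT₂.symm.trans (hc _ (ωL_mem_gradeL_one 2)))
    rw [← inv_mul_eq_iff_eq_mul₀ hq₆]
    refine mul_left_cancel₀ ?_ (hc₀.trans hc₂.symm)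
    simp [K, hβ, hγ, hm, lam2_ne_zero]
  · rintro rfl
    refine ⟨K * ((q : ℂ) ^ 6 * α) * α, fun x hx =>
      eqOn_gradeL_one (f := T ∘ₗ T) (g := (K * ((q : ℂ) ^ 6 * α) * α) • LinearMap.id)
        ?_ ?_ ?_ x hx⟩
    · simp [hTT₀, inv_mul_cancel_left₀ hq₆]
    · simp [hTT₁]
    · simp [hTT₂]

theorem IsHodge.real_iff {α β γ : ℂ} {m : ℝ} {T : Lam q →ₗ[ℂ] Lam q}
    (hT : IsHodge q α β γ m T) {st : Lam q →ₛₗ[starRingEnd ℂ] Lam q} (hst : IsStar q st)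
    (hq : q ≠ 0) (hm : m ≠ 0) :
    (∀ x ∈ gradeL q 1, T (st x) = st (T x)) ↔
      starRingEnd ℂ β = (q : ℂ) ^ 6 * α ∧ starRingEnd ℂ γ = γ := by
  obtain ⟨-, hT₀, hT₁, hT₂, -, -, -, -⟩ := hT
  obtain ⟨-, hs₀, hs₁, hs₂, hsfm, hsfp, hsfz, -⟩ := hst
  have hqC : (q : ℂ) ≠ 0 := by exact_mod_cast hq
  have hmC : (m : ℂ) ≠ 0 := by exact_mod_cast hm
  have hR₀ : T (st (ωL q 0)) - st (T (ωL q 0))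
      = (m * (starRingEnd ℂ β / (q : ℂ) ^ 6 - α)) • fp q := by
    rw [hs₀, map_neg, hT₁, hT₀, map_smulₛₗ, hsfm]
    simp only [map_neg, map_mul, map_inv₀, map_pow, Complex.conj_ofReal]
    module
  have hR₁ : T (st (ωL q 1)) - st (T (ωL q 1))
      = (m * (β / (q : ℂ) ^ 2 - (q : ℂ) ^ 4 * starRingEnd ℂ α)) • fm q := by
    rw [hs₁, map_neg, hT₀, hT₁, map_smulₛₗ, hsfp]
    simp only [map_mul, Complex.conj_ofReal]
    module
  have hR₂ : T (st (ωL q 2)) - st (T (ωL q 2)) = (m * (starRingEnd ℂ γ - γ)) • fz q := by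
    rw [hs₂, map_neg, hT₂, map_smulₛₗ, hsfz]
    simp only [map_mul, Complex.conj_ofReal]
    module
  constructor
  · intro h
    have e₀ := h _ (ωL_mem_gradeL_one 0)
    have e₂ := h _ (ωL_mem_gradeL_one 2)
    rw [← sub_eq_zero, hR₀, smul_eq_zero_iff_left fp_ne_zero, mul_eq_zero, or_iff_right hmC,
      sub_eq_zero, div_eq_iff (pow_ne_zero 6 hqC), mul_comm] at e₀
    rw [← sub_eq_zero, hR₂, smul_eq_zero_iff_left (fz_ne_zero hq), mul_eq_zero,
      or_iff_right hmC, sub_eq_zero] at e₂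
    exact ⟨e₀, e₂⟩
  · rintro ⟨hβ, hγ⟩
    have hβ' : β = (q : ℂ) ^ 6 * starRingEnd ℂ α := by
      simpa using congrArg (starRingEnd ℂ) hβ
    refine eqOn_gradeL_one (f := T ∘ₛₗ st) (g := st ∘ₛₗ T) ?_ ?_ ?_ <;>
      rw [LinearMap.comp_apply, LinearMap.comp_apply, ← sub_eq_zero]
    · rw [hR₀, hβ]
      field_simp
      simp
    · rw [hR₁, hβ']
      field_simp
      simp
    · simp [hR₂, hγ]

end

theorem hodge_symmetric_and_real_iff_general (q : ℝ) (hq0 : 0 < q)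
    (α β γ : ℂ) (m : ℝ) (hβ : β ≠ 0) (hγ : γ ≠ 0) (hm : m ≠ 0)
    (T : Lam q →ₗ[ℂ] Lam q) (hT : IsHodge q α β γ (m : ℂ) T)
    (st : Lam q →ₛₗ[starRingEnd ℂ] Lam q) (hst : IsStar q st) :
    ((∃ c : ℂ, ∀ x ∈ gradeL q 1, T (T x) = c • x) ∧
        (∀ x ∈ gradeL q 1, T (st x) = st (T x))) ↔
      (β = (q : ℂ) ^ 6 * α ∧ (starRingEnd ℂ) α = α ∧ (starRingEnd ℂ) γ = γ) := by
  rw [hT.symmetric_iff hq0.ne' hβ hγ (by exact_mod_cast hm), hT.real_iff hst hq0.ne' hm]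
  have hq₆ : (q : ℂ) ^ 6 ≠ 0 := pow_ne_zero 6 (by exact_mod_cast hq0.ne')
  constructor
  · rintro ⟨rfl, hβ', hγ'⟩
    simp only [map_mul, map_pow, Complex.conj_ofReal] at hβ'
    exact ⟨rfl, mul_left_cancel₀ hq₆ hβ', hγ'⟩
  · rintro ⟨rfl, hα, hγ'⟩
    simp [hα, hγ']

/-- characterisation of the family `𝔊_σ`: the Hodge operator is both
symmetric (`T²` scalar on `Λ¹`) and real (`T(x*) = (T(x))*` on `Λ¹`) if and only if
`β = q⁶α` with `α ∈ ℝ` and `γ ∈ ℝ`. -/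
theorem hodge_symmetric_and_real_iff (q : ℝ) (hq0 : 0 < q) (hq1 : q < 1)
    (α β γ : ℂ) (m : ℝ) (hα : α ≠ 0) (hβ : β ≠ 0) (hγ : γ ≠ 0) (hm : m ≠ 0)
    (T : Lam q →ₗ[ℂ] Lam q) (hT : IsHodge q α β γ (m : ℂ) T)
    (st : Lam q →ₛₗ[starRingEnd ℂ] Lam q) (hst : IsStar q st) :
    ((∃ c : ℂ, ∀ x ∈ gradeL q 1, T (T x) = c • x) ∧
        (∀ x ∈ gradeL q 1, T (st x) = st (T x))) ↔
      (β = (q : ℂ) ^ 6 * α ∧ (starRingEnd ℂ) α = α ∧ (starRingEnd ℂ) γ = γ) :=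
  hodge_symmetric_and_real_iff_general q hq0 α β γ m hβ hγ hm T hT st hst

end
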